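/- arXiv:1302.4168 — 3 statements merged into one kernel-verified Lean document; each statement's English description precedes it below -/
import Mathlib

section
/- Let G = (V, E) be a finite simple graph with |V| = n and E nonempty, let C ≥ 2 be a capacity, let N′ ≥ 1 be a natural number, and let OPT denote the minimum cost over all placements of G with capacity C having at most N′ members; assume this minimum is attained by some placement 𝒫*. Then for every real α with 0 < α ≤ 1, at least one of the following holds: (i) 2·|E| ≤ (2/(2−α))·OPT, so that any placement of G with capacity C (all of which have cost at most 2·|E|) approximates OPT within a factor 2/(2−α); or (ii) there exists a placement of G with capacity C using at most N′·C/(2α) + 2·n members in which every edge of G is local (i.e., every edge has span 1). In particular, writing N′ = β·N_e with N_e = ⌈n/C⌉, the bound in (ii) is C·N_e·β/(2α) + 2·n members. -/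
open Finset
open scoped Classical

/-- The span of an edge `e` with respect to a family of members `P`:
the minimum number of members of `P` whose union contains both endpoints of `e`. -/
noncomputable def spanOf {V : Type*} {N : ℕ} (P : Fin N → Finset V) (e : Sym2 V) : ℕ :=
  sInf {k : ℕ | ∃ S : Finset (Fin N), S.card = k ∧ ∀ v ∈ e, ∃ i ∈ S, v ∈ P i}

/-- The cost of a family of members `P` for a graph `G`: the sum of spans of all edges. -/
noncomputable def costOf {V : Type*} [Fintype V] [DecidableEq V] (G : SimpleGraph V)
    [DecidableRel G.Adj] {N : ℕ} (P : Fin N → Finset V) : ℕ :=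
  ∑ e ∈ G.edgeFinset, spanOf P e

/-- An edge `e` is local to the family `P` if some member contains both its endpoints. -/
def IsLocal {V : Type*} {N : ℕ} (P : Fin N → Finset V) (e : Sym2 V) : Prop :=
  ∃ i, ∀ v ∈ e, v ∈ P i

/-- `P` is a placement with capacity `C`: each member has at most `C` vertices and
the members cover all of `V` (replication allowed). -/
def IsPlacement {V : Type*} [Fintype V] (C : ℕ) {N : ℕ} (P : Fin N → Finset V) : Prop :=
  (∀ i, (P i).card ≤ C) ∧ ∀ v : V, ∃ i, v ∈ P i

/-!
Let `P*` be the attaining placement, with `l` local and `q` non-local edges. Its cost is at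
least `l + 2q`, so if (i) fails then `α q < (1 - α) l`, and `l ≤ N' · C(C-1)/2` since a member
holds at most `C(C-1)/2` edges. Keep the members of `P*` and make the non-local edges local by
stars: charge each edge to one of its endpoints and cut the edges charged to a vertex into
groups of `C - 1`, each group together with its centre forming a new member. This adds at most
`q / (C - 1) + n` members, and the two bounds on `q` and `l` combine to the count in (ii).
-/

section Spans

variable {V : Type*} {N : ℕ} {P : Fin N → Finset V}

lemma exists_card_eq_spanOf (hP : ∀ v, ∃ i, v ∈ P i) (e : Sym2 V) :
    ∃ S : Finset (Fin N), S.card = spanOf P e ∧ ∀ v ∈ e, ∃ i ∈ S, v ∈ P i :=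
  Nat.sInf_mem (s := {k | ∃ S : Finset (Fin N), S.card = k ∧ ∀ v ∈ e, ∃ i ∈ S, v ∈ P i})
    ⟨_, univ, rfl, fun v _ => (hP v).imp fun i hi => ⟨mem_univ i, hi⟩⟩

lemma one_le_spanOf (hP : ∀ v, ∃ i, v ∈ P i) (e : Sym2 V) : 1 ≤ spanOf P e := by
  obtain ⟨S, hS, hcov⟩ := exists_card_eq_spanOf hP e
  obtain ⟨i, hi, -⟩ := hcov _ e.out_fst_mem
  exact hS ▸ card_pos.mpr ⟨i, hi⟩

lemma two_le_spanOf_of_not_isLocal (hP : ∀ v, ∃ i, v ∈ P i) {e : Sym2 V}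
    (he : ¬ IsLocal P e) : 2 ≤ spanOf P e := by
  obtain ⟨S, hS, hcov⟩ := exists_card_eq_spanOf hP e
  by_contra! hlt
  have hS1 : S.card ≤ 1 := by have := one_le_spanOf hP e; omega
  obtain ⟨i₀, hi₀, -⟩ := hcov _ e.out_fst_mem
  refine he ⟨i₀, fun v hv => ?_⟩
  obtain ⟨i, hi, hvi⟩ := hcov v hv
  rwa [card_le_one.mp hS1 i hi i₀ hi₀] at hvi

end Spans

section Cost

variable {V : Type*} [Fintype V] [DecidableEq V] (G : SimpleGraph V) [DecidableRel G.Adj]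

lemma card_local_add_two_mul_card_nonlocal_le_costOf {N : ℕ} {P : Fin N → Finset V}
    (hP : ∀ v, ∃ i, v ∈ P i) :
    #(G.edgeFinset.filter (IsLocal P)) + 2 * #(G.edgeFinset.filter (¬ IsLocal P ·))
      ≤ costOf G P := by
  rw [costOf, ← sum_filter_add_sum_filter_not G.edgeFinset (IsLocal P)]
  gcongr
  · exact card_eq_sum_ones _ ▸ sum_le_sum fun e _ => one_le_spanOf hP e
  · rw [mul_comm, ← smul_eq_mul, ← sum_const]
    exact sum_le_sum fun e he => two_le_spanOf_of_not_isLocal hP (mem_filter.mp he).2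

lemma card_filter_isLocal_le {C N : ℕ} {P : Fin N → Finset V} (hP : ∀ i, (P i).card ≤ C) :
    #(G.edgeFinset.filter (IsLocal P)) ≤ N * C.choose 2 := by
  have hsub : G.edgeFinset.filter (IsLocal P) ⊆
      univ.biUnion fun i => (P i).offDiag.image Sym2.mk.uncurry := by
    intro e he
    obtain ⟨heE, i, hi⟩ := mem_filter.mp he
    have hnd := G.not_isDiag_of_mem_edgeSet (SimpleGraph.mem_edgeFinset.mp heE)
    induction e using Sym2.ind with
    | _ a b =>
      refine mem_biUnion.mpr ⟨i, mem_univ i, mem_image.mpr ⟨(a, b), ?_, rfl⟩⟩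
      exact mem_offDiag.mpr ⟨hi a (Sym2.mem_mk_left a b), hi b (Sym2.mem_mk_right a b),
        fun h => hnd (Sym2.mk_isDiag_iff.mpr h)⟩
  calc #(G.edgeFinset.filter (IsLocal P))
      ≤ ∑ i, #((P i).offDiag.image Sym2.mk.uncurry) := (card_le_card hsub).trans card_biUnion_le
    _ = ∑ i, (P i).card.choose 2 := by simp only [Sym2.card_image_offDiag]
    _ ≤ ∑ _i : Fin N, C.choose 2 := sum_le_sum fun i _ => Nat.choose_le_choose 2 (hP i)
    _ = N * C.choose 2 := by simp

end Cost

lemma Finset.exists_cover_card_le {α : Type*} [DecidableEq α] {c : ℕ} (hc : 0 < c)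
    (s : Finset α) :
    ∃ F : Finset (Finset α), (∀ t ∈ F, #t ≤ c) ∧ (∀ x ∈ s, ∃ t ∈ F, x ∈ t) ∧
      c * #F ≤ #s + c := by
  induction s using strongInduction with
  | H s ih =>
    by_cases hs : #s ≤ c
    · exact ⟨{s}, by simpa using hs, fun x hx => ⟨s, mem_singleton_self s, hx⟩, by simp⟩
    obtain ⟨T, hTs, hT⟩ := exists_subset_card_eq (le_of_not_ge hs)
    obtain ⟨F, hF, hcov, hcard⟩ := ih (s \ T) (sdiff_ssubset hTs (card_pos.mp (by omega)))
    refine ⟨insert T F, ?_, fun x hx => ?_, ?_⟩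
    · exact forall_mem_insert _ _ _ |>.mpr ⟨hT.le, hF⟩
    · by_cases hxT : x ∈ T
      · exact ⟨T, mem_insert_self T F, hxT⟩
      · obtain ⟨t, ht, hxt⟩ := hcov x (mem_sdiff.mpr ⟨hx, hxT⟩)
        exact ⟨t, mem_insert_of_mem ht, hxt⟩
    · have := Nat.mul_le_mul_left c (card_insert_le T F)
      rw [card_sdiff_of_subset hTs] at hcard
      rw [mul_add] at this
      omega

lemma exists_star_cover {V : Type*} [Fintype V] [DecidableEq V] {c : ℕ} (hc : 0 < c)
    (E' : Finset (Sym2 V)) :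
    ∃ F : Finset (Finset V), (∀ t ∈ F, #t ≤ c + 1) ∧ (∀ e ∈ E', ∃ t ∈ F, ∀ v ∈ e, v ∈ t) ∧
      c * #F ≤ #E' + c * Fintype.card V := by
  choose chunks hsize hcov hcard using fun a : V =>
    ((E'.filter (·.out.1 = a)).image (·.out.2)).exists_cover_card_le hc
  refine ⟨univ.biUnion fun a => (chunks a).image (insert a), ?_, fun e he => ?_, ?_⟩
  · simp only [mem_biUnion, mem_image]
    rintro _ ⟨a, -, t, ht, rfl⟩
    exact (card_insert_le a t).trans (by have := hsize a t ht; omega)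
  · obtain ⟨t, ht, hbt⟩ := hcov e.out.1 e.out.2 (mem_image_of_mem _ (mem_filter.mpr ⟨he, rfl⟩))
    refine ⟨insert e.out.1 t, mem_biUnion.mpr ⟨_, mem_univ _, mem_image_of_mem _ ht⟩, ?_⟩
    intro v hv
    rw [← e.out_eq, ← Sym2.mk, Sym2.mem_iff] at hv
    rcases hv with rfl | rfl
    · exact mem_insert_self _ t
    · exact mem_insert_of_mem hbt
  · calc c * #(univ.biUnion fun a => (chunks a).image (insert a))
        ≤ c * ∑ a, #(chunks a) :=
          Nat.mul_le_mul_left c (card_biUnion_le.trans (sum_le_sum fun a _ => card_image_le))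
      _ ≤ ∑ a, (#(E'.filter (·.out.1 = a)) + c) := by
          rw [mul_sum]
          exact sum_le_sum fun a _ => (hcard a).trans (by gcongr; exact card_image_le)
      _ = #E' + c * Fintype.card V := by
          rw [sum_add_distrib, ← card_eq_sum_card_fiberwise fun e _ => mem_univ e.out.1]
          simp [mul_comm]

lemma exists_placement_of_finset {V : Type*} [Fintype V] {C : ℕ} (F : Finset (Finset V))
    (hcard : ∀ t ∈ F, #t ≤ C) (hcov : ∀ v, ∃ t ∈ F, v ∈ t) :
    ∃ P : Fin #F → Finset V, IsPlacement C P ∧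
      ∀ e : Sym2 V, (∃ t ∈ F, ∀ v ∈ e, v ∈ t) → IsLocal P e := by
  refine ⟨fun i => F.equivFin.symm i, ⟨fun i => hcard _ (F.equivFin.symm i).2, fun v => ?_⟩,
    fun e ⟨t, ht, he⟩ => ⟨F.equivFin ⟨t, ht⟩, by simpa using he⟩⟩
  obtain ⟨t, ht, hv⟩ := hcov v
  exact ⟨F.equivFin ⟨t, ht⟩, by simpa using hv⟩

lemma mul_nonlocal_le_of_lt {α l q cost : ℝ} (hα : α < 2) (hcost : l + 2 * q ≤ cost)
    (h : 2 / (2 - α) * cost < 2 * (l + q)) : α * q ≤ (1 - α) * l := by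
  rw [div_mul_eq_mul_div, div_lt_iff₀ (by linarith)] at h
  nlinarith

lemma add_le_of_star_cover {α C N M₀ l q k n : ℝ} (hα₀ : 0 < α) (hα₁ : α ≤ 1) (hC : 2 ≤ C)
    (hM₀ : 0 ≤ M₀) (hM₀N : M₀ ≤ N) (hn : 0 ≤ n) (hq : α * q ≤ (1 - α) * l)
    (hl : l ≤ M₀ * (C * (C - 1) / 2)) (hk : (C - 1) * k ≤ q + (C - 1) * n) :
    M₀ + k ≤ N * C / (2 * α) + 2 * n := by
  have hC₁ : 0 < C - 1 := by linarith
  have hrhs : 2 * α * (C - 1) * (N * C / (2 * α) + 2 * n) = (C - 1) * (N * C + 4 * α * n) := by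
    field_simp
    ring
  refine le_of_mul_le_mul_left ?_ (by positivity : 0 < 2 * α * (C - 1))
  rw [hrhs]
  nlinarith [mul_le_mul_of_nonneg_left hk (by positivity : 0 ≤ 2 * α),
    mul_le_mul_of_nonneg_left hl (by linarith : 0 ≤ 1 - α),
    mul_nonneg (mul_nonneg hα₀.le (by linarith : 0 ≤ C - 2)) (mul_nonneg hC₁.le hM₀),
    mul_le_mul_of_nonneg_left hM₀N (by positivity : 0 ≤ C * (C - 1)),
    mul_nonneg (mul_nonneg hα₀.le hC₁.le) hn]

theorem approx_or_span_one_placement_general {V : Type*} [Fintype V] [DecidableEq V]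
    (G : SimpleGraph V) [DecidableRel G.Adj] (n : ℕ) (hn : Fintype.card V = n)
    (C : ℕ) (hC : 2 ≤ C) (N' : ℕ)
    (OPT : ℕ)
    (hatt : ∃ (M : ℕ) (_ : M ≤ N') (Pstar : Fin M → Finset V),
      IsPlacement C Pstar ∧ costOf G Pstar = OPT) :
    ∀ α : ℝ, 0 < α → α ≤ 1 →
      (2 * (G.edgeFinset.card : ℝ) ≤ 2 / (2 - α) * (OPT : ℝ)) ∨
      (∃ (M : ℕ) (P : Fin M → Finset V), IsPlacement C P ∧
        (∀ e ∈ G.edgeFinset, IsLocal P e) ∧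
        (M : ℝ) ≤ (N' : ℝ) * (C : ℝ) / (2 * α) + 2 * (n : ℝ)) := by
  intro α hα₀ hα₁
  refine or_iff_not_imp_left.mpr fun happrox => ?_
  obtain ⟨M₀, hM₀, Pstar, hPstar, rfl⟩ := hatt
  set L := G.edgeFinset.filter (IsLocal Pstar)
  set NL := G.edgeFinset.filter (¬ IsLocal Pstar ·)
  have hsplit : #L + #NL = #G.edgeFinset := card_filter_add_card_filter_not _
  have hcost := card_local_add_two_mul_card_nonlocal_le_costOf G hPstar.2
  have hL := card_filter_isLocal_le G hPstar.1
  obtain ⟨S, hSsize, hScov, hSnum⟩ := exists_star_cover (c := C - 1) (by omega) NL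
  obtain ⟨P, hP, hlocal⟩ := exists_placement_of_finset (C := C) (univ.image Pstar ∪ S)
    (by
      simp only [mem_union, mem_image]
      rintro t (⟨i, -, rfl⟩ | ht)
      exacts [hPstar.1 i, (hSsize t ht).trans_eq (by omega)])
    (fun v => by
      obtain ⟨i, hi⟩ := hPstar.2 v
      exact ⟨Pstar i, by simp, hi⟩)
  refine ⟨_, P, hP, fun e he => hlocal e ?_, ?_⟩
  · by_cases he' : IsLocal Pstar e
    · obtain ⟨i, hi⟩ := he'
      exact ⟨Pstar i, by simp, hi⟩
    · obtain ⟨t, ht, hte⟩ := hScov e (mem_filter.mpr ⟨he, he'⟩)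
      exact ⟨t, mem_union_right _ ht, hte⟩
  have hcard : #(univ.image Pstar ∪ S) ≤ M₀ + #S :=
    (card_union_le _ _).trans (by grw [card_image_le, card_univ, Fintype.card_fin])
  have hq : α * #NL ≤ (1 - α) * #L := by
    refine mul_nonlocal_le_of_lt (cost := costOf G Pstar) (by linarith) (by exact_mod_cast hcost) ?_
    push_cast [← hsplit] at happrox
    linarith
  grw [hcard]
  push_cast
  refine add_le_of_star_cover hα₀ hα₁ (by exact_mod_cast hC) (Nat.cast_nonneg _)
    (by exact_mod_cast hM₀) (Nat.cast_nonneg _) hq ?_ ?_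
  · rw [← Nat.cast_choose_two]; exact_mod_cast hL
  · rw [← hn, ← Nat.cast_pred (by omega)]; exact_mod_cast hSnum

/-- Let `OPT` be the minimum cost over all placements of `G` with capacity
`C ≥ 2` having at most `N'` members, attained by some placement. Then for every real
`0 < α ≤ 1`, either `2|E| ≤ (2/(2-α)) * OPT` (so every placement, having cost at most
`2|E|`, approximates `OPT` within factor `2/(2-α)`), or there is a placement with capacity
`C` using at most `N'·C/(2α) + 2n` members in which every edge is local. -/
theorem approx_or_span_one_placement {V : Type*} [Fintype V] [DecidableEq V]
    (G : SimpleGraph V) [DecidableRel G.Adj] (n : ℕ) (hn : Fintype.card V = n)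
    (hE : G.edgeFinset.Nonempty) (C : ℕ) (hC : 2 ≤ C) (N' : ℕ) (hN' : 1 ≤ N')
    (OPT : ℕ)
    (hatt : ∃ (M : ℕ) (_ : M ≤ N') (Pstar : Fin M → Finset V),
      IsPlacement C Pstar ∧ costOf G Pstar = OPT)
    (hmin : ∀ (M : ℕ), M ≤ N' → ∀ Q : Fin M → Finset V,
      IsPlacement C Q → OPT ≤ costOf G Q) :
    ∀ α : ℝ, 0 < α → α ≤ 1 →
      (2 * (G.edgeFinset.card : ℝ) ≤ 2 / (2 - α) * (OPT : ℝ)) ∨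
      (∃ (M : ℕ) (P : Fin M → Finset V), IsPlacement C P ∧
        (∀ e ∈ G.edgeFinset, IsLocal P e) ∧
        (M : ℝ) ≤ (N' : ℝ) * (C : ℝ) / (2 * α) + 2 * (n : ℝ)) :=
  approx_or_span_one_placement_general G n hn C hC N' OPT hatt
end

section
/- Let G = (V, E) be a finite simple graph with |V| = n, let C ≥ 1 be a capacity, and let δ be a real number with 1/2 ≤ δ < 1. Suppose that for every subset W ⊆ V with |W| > C there exist sets A, B ⊆ W with A ∪ B = W, no edge of G joining a vertex of A \ B to a vertex of B \ A, |A| ≤ δ·|W|, and |B| ≤ δ·|W|. Then for every natural number l with δ^l · n ≤ C, there exists a family of at most 2^l subsets of V, each of cardinality at most C, whose union is V, such that every edge of G has both endpoints contained in some member of the family (i.e., a placement with capacity C using at most 2^l members in which every edge is local). -/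
open Finset
open scoped Classical

/-!
Split a vertex set along a balanced separation, replicating the separator into both sides, and
recurse. Each round multiplies the size of every part by at most `δ` and at most doubles the
number of parts, so after `l` rounds there are at most `2 ^ l` parts, each of at most
`δ ^ l * n ≤ C` vertices. No edge joins the two private sides of a separation, so every edge
stays inside one side at each round and ends up inside a single part.
-/

section

variable {V : Type*}

structure IsLocalCover (G : SimpleGraph V) (C : ℕ) (W : Finset V) (P : Finset (Finset V)) :
    Prop where
  card_le : ∀ S ∈ P, S.card ≤ C
  cover : ∀ v ∈ W, ∃ S ∈ P, v ∈ S
  adj : ∀ a ∈ W, ∀ b ∈ W, G.Adj a b → ∃ S ∈ P, a ∈ S ∧ b ∈ S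

variable {G : SimpleGraph V} {C : ℕ}

theorem IsLocalCover.singleton {W : Finset V} (hW : W.card ≤ C) : IsLocalCover G C W {W} :=
  ⟨fun _ hS ↦ mem_singleton.1 hS ▸ hW, fun _ hv ↦ ⟨W, mem_singleton_self W, hv⟩,
    fun _ ha _ hb _ ↦ ⟨W, mem_singleton_self W, ha, hb⟩⟩

theorem IsLocalCover.isPlacement [Fintype V] {P : Finset (Finset V)}
    (hP : IsLocalCover G C univ P) : IsPlacement C fun i ↦ (P.equivFin.symm i : Finset V) := by
  refine ⟨fun i ↦ hP.card_le _ (P.equivFin.symm i).2, fun v ↦ ?_⟩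
  obtain ⟨S, hS, hvS⟩ := hP.cover v (mem_univ v)
  exact ⟨P.equivFin ⟨S, hS⟩, by simpa using hvS⟩

theorem IsLocalCover.isLocal [Fintype V] [DecidableRel G.Adj] {P : Finset (Finset V)}
    (hP : IsLocalCover G C univ P) :
    ∀ e ∈ G.edgeFinset, IsLocal (fun i ↦ (P.equivFin.symm i : Finset V)) e := by
  intro e he
  induction e using Sym2.ind with
  | _ a b =>
    obtain ⟨S, hS, haS, hbS⟩ := hP.adj a (mem_univ a) b (mem_univ b) (by simpa using he)
    refine ⟨P.equivFin ⟨S, hS⟩, fun v hv ↦ ?_⟩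
    rcases Sym2.mem_iff.1 hv with rfl | rfl <;> simpa

variable [DecidableEq V]

def IsSeparation (G : SimpleGraph V) (A B : Finset V) : Prop :=
  ∀ a ∈ A \ B, ∀ b ∈ B \ A, ¬ G.Adj a b

theorem IsSeparation.exists_side_of_adj {A B : Finset V} (hAB : IsSeparation G A B) {a b : V}
    (hab : G.Adj a b) (ha : a ∈ A ∪ B) (hb : b ∈ A ∪ B) :
    (a ∈ A ∧ b ∈ A) ∨ (a ∈ B ∧ b ∈ B) := by
  have := hAB a; have := hAB b
  simp only [mem_union, mem_sdiff] at *
  have := hab.symm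
  tauto

theorem IsLocalCover.union {A B : Finset V} {P Q : Finset (Finset V)}
    (hP : IsLocalCover G C A P) (hQ : IsLocalCover G C B Q) (hAB : IsSeparation G A B) :
    IsLocalCover G C (A ∪ B) (P ∪ Q) where
  card_le S hS := (mem_union.1 hS).elim (hP.card_le S) (hQ.card_le S)
  cover v hv := by
    rcases mem_union.1 hv with hv | hv
    · obtain ⟨S, hS, hvS⟩ := hP.cover v hv
      exact ⟨S, mem_union_left _ hS, hvS⟩
    · obtain ⟨S, hS, hvS⟩ := hQ.cover v hv
      exact ⟨S, mem_union_right _ hS, hvS⟩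
  adj a ha b hb hab := by
    rcases hAB.exists_side_of_adj hab ha hb with ⟨haA, hbA⟩ | ⟨haB, hbB⟩
    · obtain ⟨S, hS, hST⟩ := hP.adj a haA b hbA hab
      exact ⟨S, mem_union_left _ hS, hST⟩
    · obtain ⟨S, hS, hST⟩ := hQ.adj a haB b hbB hab
      exact ⟨S, mem_union_right _ hS, hST⟩

theorem exists_isLocalCover_of_forall_isSeparation {δ : ℝ}
    (hsep : ∀ W : Finset V, C < W.card →
      ∃ A B : Finset V, A ⊆ W ∧ B ⊆ W ∧ A ∪ B = W ∧ IsSeparation G A B ∧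
        (A.card : ℝ) ≤ δ * W.card ∧ (B.card : ℝ) ≤ δ * W.card) :
    ∀ (l : ℕ) (W : Finset V), δ ^ l * W.card ≤ C →
      ∃ P : Finset (Finset V), P.card ≤ 2 ^ l ∧ IsLocalCover G C W P := by
  intro l
  induction l with
  | zero =>
    intro W hW
    refine ⟨{W}, by simp, .singleton ?_⟩
    exact_mod_cast (by simpa using hW : (W.card : ℝ) ≤ C)
  | succ l ih =>
    intro W hW
    by_cases hWC : W.card ≤ C
    · exact ⟨{W}, by simp [Nat.one_le_two_pow], .singleton hWC⟩
    obtain ⟨A, B, -, -, rfl, hAB, hA, hB⟩ := hsep W (not_le.1 hWC)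
    -- a separation of a nonempty set can only be `δ`-balanced if `δ ≥ 0`
    have hδ : 0 ≤ δ := nonneg_of_mul_nonneg_left ((Nat.cast_nonneg _).trans hA)
      (by exact_mod_cast (Nat.zero_le C).trans_lt (not_le.1 hWC))
    have shrink {X : Finset V} (hX : (X.card : ℝ) ≤ δ * (A ∪ B).card) : δ ^ l * X.card ≤ C :=
      calc δ ^ l * X.card ≤ δ ^ l * (δ * (A ∪ B).card) := by gcongr
        _ = δ ^ (l + 1) * (A ∪ B).card := by ring
        _ ≤ C := hW
    obtain ⟨P, hPcard, hP⟩ := ih A (shrink hA)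
    obtain ⟨Q, hQcard, hQ⟩ := ih B (shrink hB)
    refine ⟨P ∪ Q, ?_, hP.union hQ hAB⟩
    calc (P ∪ Q).card ≤ P.card + Q.card := card_union_le P Q
      _ ≤ 2 ^ l + 2 ^ l := add_le_add hPcard hQcard
      _ = 2 ^ (l + 1) := by ring

end

theorem recursive_separator_placement_general {V : Type*} [Fintype V] [DecidableEq V]
    (G : SimpleGraph V) [DecidableRel G.Adj] (n : ℕ) (hn : Fintype.card V = n)
    (C : ℕ) (δ : ℝ)
    (hsep : ∀ W : Finset V, C < W.card →
      ∃ A B : Finset V, A ⊆ W ∧ B ⊆ W ∧ A ∪ B = W ∧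
        (∀ a ∈ A \ B, ∀ b ∈ B \ A, ¬ G.Adj a b) ∧
        (A.card : ℝ) ≤ δ * W.card ∧ (B.card : ℝ) ≤ δ * W.card) :
    ∀ l : ℕ, δ ^ l * (n : ℝ) ≤ (C : ℝ) →
      ∃ (N : ℕ) (P : Fin N → Finset V), N ≤ 2 ^ l ∧ IsPlacement C P ∧
        ∀ e ∈ G.edgeFinset, IsLocal P e := by
  intro l hl
  obtain ⟨P, hPcard, hP⟩ := exists_isLocalCover_of_forall_isSeparation hsep l univ
    (by rwa [card_univ, hn])
  exact ⟨P.card, _, hPcard, hP.isPlacement, hP.isLocal⟩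

/-- If every vertex subset `W` with `|W| > C` admits a `δ`-balanced separation
(`1/2 ≤ δ < 1`), then for every `l` with `δ^l * n ≤ C` there is a placement with capacity
`C` using at most `2^l` members in which every edge is local. -/
theorem recursive_separator_placement {V : Type*} [Fintype V] [DecidableEq V]
    (G : SimpleGraph V) [DecidableRel G.Adj] (n : ℕ) (hn : Fintype.card V = n)
    (C : ℕ) (hC : 1 ≤ C) (δ : ℝ) (hδ0 : 1 / 2 ≤ δ) (hδ1 : δ < 1)
    (hsep : ∀ W : Finset V, C < W.card →
      ∃ A B : Finset V, A ⊆ W ∧ B ⊆ W ∧ A ∪ B = W ∧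
        (∀ a ∈ A \ B, ∀ b ∈ B \ A, ¬ G.Adj a b) ∧
        (A.card : ℝ) ≤ δ * W.card ∧ (B.card : ℝ) ≤ δ * W.card) :
    ∀ l : ℕ, δ ^ l * (n : ℝ) ≤ (C : ℝ) →
      ∃ (N : ℕ) (P : Fin N → Finset V), N ≤ 2 ^ l ∧ IsPlacement C P ∧
        ∀ e ∈ G.edgeFinset, IsLocal P e :=
  recursive_separator_placement_general G n hn C δ hsep
end

section
/- Let G = (V, E) be a finite simple graph with |V| = n, let C ≥ 1 be a capacity, and set N_e = ⌈n/C⌉. Suppose that for every subset W ⊆ V with |W| > C there exist sets A, B ⊆ W with A ∪ B = W, no edge of G joining a vertex of A \ B to a vertex of B \ A, |A| ≤ 0.67·|W|, and |B| ≤ 0.67·|W|. Then there exists a placement of G with capacity C using at most 2·N_e^{1.74} members in which every edge of G is local (i.e., every edge has span 1). -/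
open Finset
open scoped Classical

/-! Split any vertex set larger than `C` along a balanced separation `A ∪ B`: since no edge joins
`A \ B` to `B \ A`, every edge lies inside `A` or inside `B`, so concatenating placements of the
two sides keeps every edge local. With separation ratio `α`, a set of size at most `C * α⁻¹ ^ d`
thus needs at most `2 ^ d` members. Taking `d` minimal with `N_e ≤ (100/67) ^ d` gives
`2 ^ d ≤ 2 * N_e ^ 1.74`, because `2 ≤ (100/67) ^ 1.74`. -/

lemma Fin.exists_append_iff {α : Type*} {m n : ℕ} (a : Fin m → α) (b : Fin n → α)
    (p : α → Prop) : (∃ i, p (Fin.append a b i)) ↔ (∃ i, p (a i)) ∨ ∃ i, p (b i) := by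
  constructor
  · rintro ⟨i, hi⟩
    induction i using Fin.addCases with
    | left i => exact .inl ⟨i, by simpa using hi⟩
    | right i => exact .inr ⟨i, by simpa using hi⟩
  · rintro (⟨i, hi⟩ | ⟨i, hi⟩)
    · exact ⟨Fin.castAdd n i, by simpa using hi⟩
    · exact ⟨Fin.natAdd m i, by simpa using hi⟩

lemma two_le_100_div_67_rpow : (2 : ℝ) ≤ (100 / 67 : ℝ) ^ (1.74 : ℝ) := by
  refine le_of_pow_le_pow_left₀ (n := 100) (by norm_num) (by positivity) ?_
  rw [← Real.rpow_natCast ((100 / 67 : ℝ) ^ (1.74 : ℝ)) 100, ← Real.rpow_mul (by norm_num)]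
  norm_num

section Separation

variable {V : Type*} (G : SimpleGraph V) (C : ℕ)

def IsLocalPlacementOn (W : Finset V) {N : ℕ} (P : Fin N → Finset V) : Prop :=
  (∀ i, (P i).card ≤ C) ∧ (∀ v ∈ W, ∃ i, v ∈ P i) ∧
    ∀ u ∈ W, ∀ v ∈ W, G.Adj u v → ∃ i, u ∈ P i ∧ v ∈ P i

variable {G C}

lemma isLocalPlacementOn_const {W : Finset V} (hW : W.card ≤ C) :
    IsLocalPlacementOn G C W (fun _ : Fin 1 ↦ W) :=
  ⟨fun _ ↦ hW, fun _ hv ↦ ⟨0, hv⟩, fun _ hu _ hv _ ↦ ⟨0, hu, hv⟩⟩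

lemma adj_mem_left_or_right [DecidableEq V] {A B : Finset V}
    (hcross : ∀ a ∈ A \ B, ∀ b ∈ B \ A, ¬ G.Adj a b) {u v : V}
    (hu : u ∈ A ∪ B) (hv : v ∈ A ∪ B) (huv : G.Adj u v) :
    (u ∈ A ∧ v ∈ A) ∨ (u ∈ B ∧ v ∈ B) := by
  grind [SimpleGraph.Adj.symm]

lemma IsLocalPlacementOn.append [DecidableEq V] {A B : Finset V} {m n : ℕ}
    {P₁ : Fin m → Finset V} {P₂ : Fin n → Finset V}
    (hcross : ∀ a ∈ A \ B, ∀ b ∈ B \ A, ¬ G.Adj a b)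
    (h₁ : IsLocalPlacementOn G C A P₁) (h₂ : IsLocalPlacementOn G C B P₂) :
    IsLocalPlacementOn G C (A ∪ B) (Fin.append P₁ P₂) := by
  obtain ⟨hcap₁, hcov₁, hloc₁⟩ := h₁
  obtain ⟨hcap₂, hcov₂, hloc₂⟩ := h₂
  refine ⟨Fin.addCases (by simpa using hcap₁) (by simpa using hcap₂), ?_, ?_⟩
  · intro v hv
    refine (Fin.exists_append_iff _ _ (v ∈ ·)).mpr ?_
    rcases mem_union.mp hv with hv | hv
    exacts [.inl (hcov₁ v hv), .inr (hcov₂ v hv)]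
  · intro u hu v hv huv
    refine (Fin.exists_append_iff _ _ (fun s ↦ u ∈ s ∧ v ∈ s)).mpr ?_
    rcases adj_mem_left_or_right hcross hu hv huv with ⟨hu, hv⟩ | ⟨hu, hv⟩
    exacts [.inl (hloc₁ u hu v hv huv), .inr (hloc₂ u hu v hv huv)]

lemma exists_isLocalPlacementOn_of_card_le [DecidableEq V] {α : ℝ} (hα : 0 ≤ α)
    (hsep : ∀ W : Finset V, C < W.card →
      ∃ A B : Finset V, A ∪ B = W ∧ (∀ a ∈ A \ B, ∀ b ∈ B \ A, ¬ G.Adj a b) ∧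
        (A.card : ℝ) ≤ α * W.card ∧ (B.card : ℝ) ≤ α * W.card)
    (d : ℕ) (W : Finset V) (hW : (W.card : ℝ) ≤ C * α⁻¹ ^ d) :
    ∃ N ≤ 2 ^ d, ∃ P : Fin N → Finset V, IsLocalPlacementOn G C W P := by
  induction d generalizing W with
  | zero =>
    exact ⟨1, le_rfl, _, isLocalPlacementOn_const (by exact_mod_cast (by simpa using hW))⟩
  | succ d ih =>
    by_cases hWC : W.card ≤ C
    · exact ⟨1, Nat.one_le_two_pow, _, isLocalPlacementOn_const hWC⟩
    obtain ⟨A, B, rfl, hcross, hA, hB⟩ := hsep W (not_le.mp hWC)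
    have shrink : α * (A ∪ B).card ≤ C * α⁻¹ ^ d := calc
      α * (A ∪ B).card ≤ α * (C * α⁻¹ ^ (d + 1)) := by gcongr
      _ = (α * α⁻¹) * (C * α⁻¹ ^ d) := by ring
      _ ≤ C * α⁻¹ ^ d := mul_le_of_le_one_left (by positivity) mul_inv_le_one
    obtain ⟨m, hm, P₁, h₁⟩ := ih A (hA.trans shrink)
    obtain ⟨n, hn, P₂, h₂⟩ := ih B (hB.trans shrink)
    exact ⟨m + n, by omega, _, h₁.append hcross h₂⟩

end Separation

lemma isLocal_mk_iff {V : Type*} {N : ℕ} (P : Fin N → Finset V) (u v : V) :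
    IsLocal P s(u, v) ↔ ∃ i, u ∈ P i ∧ v ∈ P i := by
  simp [IsLocal]

lemma exists_le_pow_and_two_pow_le {r p x : ℝ} (hr : 1 < r) (hp : 0 ≤ p) (hrp : 2 ≤ r ^ p)
    (hx : 1 ≤ x) : ∃ d : ℕ, x ≤ r ^ d ∧ (2 : ℝ) ^ d ≤ 2 * x ^ p := by
  have hex : ∃ d : ℕ, x ≤ r ^ d := (pow_unbounded_of_one_lt x hr).imp fun _ ↦ le_of_lt
  refine ⟨Nat.find hex, Nat.find_spec hex, ?_⟩
  cases hd : Nat.find hex with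
  | zero => simp only [pow_zero]; linarith [Real.one_le_rpow hx hp]
  | succ k =>
    have hk : r ^ k < x := not_le.mp (Nat.find_min hex (by omega))
    calc (2 : ℝ) ^ (k + 1) = 2 * 2 ^ k := by ring
      _ ≤ 2 * (r ^ p) ^ k := by gcongr
      _ = 2 * (r ^ k) ^ p := by
        rw [← Real.rpow_natCast (r ^ p), ← Real.rpow_mul (by positivity), mul_comm p,
          Real.rpow_mul (by positivity), Real.rpow_natCast]
      _ ≤ 2 * x ^ p := by gcongr

/-- If every vertex subset `W` with `|W| > C` admits a `0.67`-balanced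
separation, then there is a placement with capacity `C` using at most `2 * N_e ^ 1.74`
members (where `N_e = ⌈n / C⌉`) in which every edge is local. -/
theorem separator_placement_Ne_pow {V : Type*} [Fintype V] [DecidableEq V]
    (G : SimpleGraph V) [DecidableRel G.Adj] (n : ℕ) (hn : Fintype.card V = n)
    (C : ℕ) (hC : 1 ≤ C)
    (hsep : ∀ W : Finset V, C < W.card →
      ∃ A B : Finset V, A ⊆ W ∧ B ⊆ W ∧ A ∪ B = W ∧
        (∀ a ∈ A \ B, ∀ b ∈ B \ A, ¬ G.Adj a b) ∧
        (A.card : ℝ) ≤ 0.67 * W.card ∧ (B.card : ℝ) ≤ 0.67 * W.card) :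
    ∃ (N : ℕ) (P : Fin N → Finset V), IsPlacement C P ∧
      (∀ e ∈ G.edgeFinset, IsLocal P e) ∧
      (N : ℝ) ≤ 2 * ((⌈(n : ℝ) / (C : ℝ)⌉₊ : ℝ)) ^ (1.74 : ℝ) := by
  rcases Nat.eq_zero_or_pos n with rfl | hn0
  · have : IsEmpty V := Fintype.card_eq_zero_iff.mp hn
    exact ⟨0, Fin.elim0, ⟨fun i ↦ i.elim0, isEmptyElim⟩, fun e _ ↦ isEmptyElim e, by norm_num⟩
  have hNe : (1 : ℝ) ≤ ⌈(n : ℝ) / C⌉₊ := by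
    exact_mod_cast Nat.one_le_ceil_iff.mpr (by positivity)
  obtain ⟨d, hd, hNd⟩ :=
    exists_le_pow_and_two_pow_le (by norm_num) (by norm_num) two_le_100_div_67_rpow hNe
  have hcard : ((univ : Finset V).card : ℝ) ≤ C * (0.67 : ℝ)⁻¹ ^ d := calc
    ((univ : Finset V).card : ℝ) = C * (n / C) := by
      rw [card_univ, hn]; field_simp
    _ ≤ C * (100 / 67) ^ d := by gcongr; exact (Nat.le_ceil _).trans hd
    _ = C * (0.67 : ℝ)⁻¹ ^ d := by norm_num
  obtain ⟨N, hN, P, hcap, hcov, hloc⟩ := exists_isLocalPlacementOn_of_card_le (by norm_num)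
    (fun W hW ↦ let ⟨A, B, _, _, hAB, hcross, hA, hB⟩ := hsep W hW; ⟨A, B, hAB, hcross, hA, hB⟩)
    d univ hcard
  refine ⟨N, P, ⟨hcap, fun v ↦ hcov v (mem_univ v)⟩, ?_, ?_⟩
  · intro e he
    induction e using Sym2.ind with
    | h u v =>
      exact (isLocal_mk_iff P u v).mpr (hloc u (mem_univ u) v (mem_univ v) (by simpa using he))
  · calc (N : ℝ) ≤ 2 ^ d := by exact_mod_cast hN
      _ ≤ _ := hNd
end
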